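/- arXiv:1110.1605 — 4 statements merged into one kernel-verified Lean document; each statement's English description precedes it below -/
import Mathlib

section
/- With f and f̃_n as above, the total variation of f̃_n on (0,T) satisfies TV(f̃_n) ≤ TV(f) + 1/(nT). -/
/-!
On each cell `[t i, t (i+1))` the function `g` is the constant `cᵢ = Nᵢ / K`, where `Nᵢ / K` is
the largest multiple of `1 / K` below `f` on the cell, so the cell contains a point `sᵢ` with
`cᵢ ≤ f sᵢ < cᵢ + 1 / K`. A step function has variation at most the sum of its jumps, and each
jump `|cᵢ - cᵢ₊₁|` is at most `|f sᵢ - f sᵢ₊₁| + 1 / K`. The points `sᵢ` increase with `i`, so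
the jumps of `f` sum to at most its variation, and the `k - 1` errors `1 / K = 1 / (k n T)` sum
to at most `1 / (n T)`.
-/

open MeasureTheory Filter Set Topology

section Cells

variable {α : Type*} [LinearOrder α]

/-- The index of the cell `[t i, t (i+1))` containing `x`, for `x ∈ [t 0, t k)`. -/
def cellIndex (t : ℕ → α) (k : ℕ) (x : α) : ℕ :=
  Nat.findGreatest (fun i => t i ≤ x) k

theorem monotone_cellIndex (t : ℕ → α) (k : ℕ) : Monotone (cellIndex t k) :=
  fun _ _ hxy => Nat.findGreatest_mono_left (fun _ hi => hi.trans hxy) k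

theorem cellIndex_lt {t : ℕ → α} {k : ℕ} {x : α} (hx : x ∈ Ico (t 0) (t k)) :
    cellIndex t k x < k := by
  have hspec : t (cellIndex t k x) ≤ x :=
    Nat.findGreatest_spec (P := fun i => t i ≤ x) (Nat.zero_le k) hx.1
  refine (Nat.findGreatest_le k).lt_of_ne fun h => ?_
  rw [cellIndex, h] at hspec
  exact hspec.not_gt hx.2

theorem mem_Ico_cellIndex {t : ℕ → α} {k : ℕ} {x : α} (hx : x ∈ Ico (t 0) (t k)) :
    x ∈ Ico (t (cellIndex t k x)) (t (cellIndex t k x + 1)) :=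
  ⟨Nat.findGreatest_spec (P := fun i => t i ≤ x) (Nat.zero_le k) hx.1,
    not_le.1 (Nat.findGreatest_is_greatest (Nat.lt_succ_self _) (cellIndex_lt hx))⟩

theorem eVariationOn_le_sum_edist_of_eq_on_cells {E : Type*} [PseudoEMetricSpace E]
    {t : ℕ → α} {k : ℕ} {D : Set α} (hD : D ⊆ Ico (t 0) (t k)) {g : α → E} {c : ℕ → E}
    (hg : ∀ i < k, ∀ x ∈ D, x ∈ Ico (t i) (t (i + 1)) → g x = c i) :
    eVariationOn g D ≤ ∑ i ∈ Finset.range (k - 1), edist (c i) (c (i + 1)) := by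
  have hgc : EqOn g (c ∘ cellIndex t k) D := fun x hx =>
    hg _ (cellIndex_lt (hD hx)) x hx (mem_Ico_cellIndex (hD hx))
  have hmaps : MapsTo (cellIndex t k) D (Iic (k - 1)) := fun x hx =>
    Nat.le_sub_one_of_lt (cellIndex_lt (hD hx))
  calc eVariationOn g D = eVariationOn (c ∘ cellIndex t k) D := eVariationOn.eq_of_eqOn hgc
    _ ≤ eVariationOn c (Iic (k - 1)) :=
        eVariationOn.comp_le_of_monotoneOn c _ ((monotone_cellIndex t k).monotoneOn _) hmaps
    _ = ∑ i ∈ Finset.range (k - 1), edist (c i) (c (i + 1)) := by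
        simpa using eVariationOn.image_range_of_monotone c monotone_id (k - 1)

theorem monotoneOn_of_mem_cells {t s : ℕ → α} {k : ℕ} (ht : MonotoneOn t (Iic k))
    (hs : ∀ i < k, s i ∈ Ico (t i) (t (i + 1))) : MonotoneOn s (Iio k) := by
  intro i hi j hj hij
  rcases hij.eq_or_lt with rfl | hlt
  · exact le_rfl
  · calc s i ≤ t (i + 1) := (hs i hi).2.le
      _ ≤ t j := ht (mem_Iic.2 (hlt.trans hj)) (mem_Iic.2 (le_of_lt hj)) hlt
      _ ≤ s j := (hs j hj).1

end Cells

noncomputable def lowerGridIndex {α : Type*} (K : ℝ) (f : α → ℝ) (A : Set α) : ℕ :=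
  sSup {j : ℕ | ∀ u ∈ A, (j : ℝ) / K ≤ f u}

theorem exists_mem_Ico_lowerGridIndex {α : Type*} {A : Set α} {f : α → ℝ} {K : ℝ}
    (hA : A.Nonempty) (hf : ∀ u ∈ A, 0 ≤ f u) (hK : 0 < K) :
    ∃ x ∈ A, f x ∈ Ico (lowerGridIndex K f A / K) ((lowerGridIndex K f A + 1) / K) := by
  set S := {j : ℕ | ∀ u ∈ A, (j : ℝ) / K ≤ f u}
  obtain ⟨x₀, hx₀⟩ := hA
  have hbdd : BddAbove S := ⟨⌈K * f x₀⌉₊, fun j hj => by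
    have := (div_le_iff₀' hK).1 (hj x₀ hx₀)
    exact_mod_cast this.trans (Nat.le_ceil _)⟩
  have hne : S.Nonempty := ⟨0, fun u hu => by simpa using hf u hu⟩
  have hmem : lowerGridIndex K f A ∈ S := Nat.sSup_mem hne hbdd
  have hsucc : lowerGridIndex K f A + 1 ∉ S := fun h =>
    (le_csSup hbdd h).not_gt (Nat.lt_succ_self _)
  simp only [S, mem_ofPred_eq, not_forall, not_le, Nat.cast_add, Nat.cast_one] at hsucc
  obtain ⟨x, hx, hlt⟩ := hsucc
  exact ⟨x, hx, hmem x hx, hlt⟩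

theorem edist_le_edist_add_of_mem_Ico {a b x y δ : ℝ} (hx : x ∈ Ico a (a + δ))
    (hy : y ∈ Ico b (b + δ)) : edist a b ≤ edist x y + ENNReal.ofReal δ := by
  have hδ : 0 ≤ δ := by linarith [hx.1, hx.2]
  rw [edist_dist, edist_dist, ← ENNReal.ofReal_add dist_nonneg hδ, Real.dist_eq, Real.dist_eq]
  refine ENNReal.ofReal_le_ofReal (abs_sub_le_iff.2 ⟨?_, ?_⟩) <;>
    linarith [le_abs_self (x - y), neg_abs_le (x - y), hx.1, hx.2, hy.1, hy.2]

theorem sum_edist_le_eVariationOn_add {α : Type*} [LinearOrder α] {f : α → ℝ} {D : Set α}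
    {t s : ℕ → α} {c : ℕ → ℝ} {k : ℕ} {δ : ℝ} (ht : MonotoneOn t (Iic k))
    (hs : ∀ i < k, s i ∈ D ∩ Ico (t i) (t (i + 1))) (hc : ∀ i < k, f (s i) ∈ Ico (c i) (c i + δ)) :
    ∑ i ∈ Finset.range (k - 1), edist (c i) (c (i + 1)) ≤
      eVariationOn f D + (k - 1 : ℕ) * ENNReal.ofReal δ := by
  rcases k.eq_zero_or_pos with rfl | hk
  · simp
  have hsmono : MonotoneOn s (Iic (k - 1)) :=
    (monotoneOn_of_mem_cells ht fun i hi => (hs i hi).2).mono fun i hi =>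
      Nat.lt_of_le_sub_one hk hi
  calc ∑ i ∈ Finset.range (k - 1), edist (c i) (c (i + 1))
      ≤ ∑ i ∈ Finset.range (k - 1), (edist (f (s (i + 1))) (f (s i)) + ENNReal.ofReal δ) := by
        refine Finset.sum_le_sum fun i hi => ?_
        have hi : i + 1 < k := by simp only [Finset.mem_range] at hi; omega
        rw [edist_comm (f _)]
        exact edist_le_edist_add_of_mem_Ico (hc i (by omega)) (hc (i + 1) hi)
    _ = ∑ i ∈ Finset.range (k - 1), edist (f (s (i + 1))) (f (s i))
          + (k - 1 : ℕ) * ENNReal.ofReal δ := by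
        rw [Finset.sum_add_distrib, Finset.sum_const, nsmul_eq_mul, Finset.card_range]
    _ ≤ eVariationOn f D + (k - 1 : ℕ) * ENNReal.ofReal δ := by
        gcongr
        exact eVariationOn.sum_le_of_monotoneOn_Iic hsmono fun i hi =>
          (hs i (Nat.lt_of_le_sub_one hk hi)).1

theorem stmt3_general {T : ℝ} (hT : 0 < T) (f : ℝ → ℝ)
    (hnonneg : ∀ t ∈ Set.Ioo 0 T, 0 ≤ f t)
    (n k : ℕ) (hn : 1 ≤ n) (hk : 1 ≤ k) (t : ℕ → ℝ)
    (ht0 : t 0 = 0) (htk : t k = T) (hmono : StrictMonoOn t (Set.Iic k))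
    (g : ℝ → ℝ)
    (hg : ∀ i < k, ∀ s ∈ Set.Ioo 0 T, s ∈ Set.Ico (t i) (t (i+1)) →
      g s = (1 / (k * n * T)) *
        (sSup {j : ℕ | ∀ u ∈ Set.Ioo 0 T, u ∈ Set.Ico (t i) (t (i+1)) →
          (j : ℝ) / (k * n * T) ≤ f u} : ℕ)) :
    eVariationOn g (Set.Ioo 0 T) ≤ eVariationOn f (Set.Ioo 0 T) + ENNReal.ofReal (1 / (n * T)) := by
  set K : ℝ := k * n * T
  have hK : 0 < K := by positivity
  set cell : ℕ → Set ℝ := fun i => Ioo 0 T ∩ Ico (t i) (t (i + 1))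
  set c : ℕ → ℝ := fun i => lowerGridIndex K f (cell i) / K
  have hgc : ∀ i < k, ∀ x ∈ Ioo 0 T, x ∈ Ico (t i) (t (i + 1)) → g x = c i := by
    intro i hi x hx hxi
    simp only [hg i hi x hx hxi, one_div_mul_eq_div, c, lowerGridIndex, cell, mem_inter_iff,
      and_imp, K]
  have hcell : ∀ i < k, (cell i).Nonempty := fun i hi =>
    (nonempty_Ioo.2 (hmono (le_of_lt hi) hi (Nat.lt_succ_self i))).mono fun x hx =>
      ⟨⟨(ht0 ▸ hmono.monotoneOn (Nat.zero_le k) (le_of_lt hi) (Nat.zero_le i)).trans_lt hx.1,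
        hx.2.trans_le (htk ▸ hmono.monotoneOn hi (le_refl k) hi)⟩, hx.1.le, hx.2⟩
  choose! s hs hfs using fun i (hi : i < k) =>
    exists_mem_Ico_lowerGridIndex (hcell i hi) (fun u hu => hnonneg u hu.1) hK
  have hD : Ioo 0 T ⊆ Ico (t 0) (t k) := ht0 ▸ htk ▸ Ioo_subset_Ico_self
  have herr : ((k - 1 : ℕ) : ENNReal) * ENNReal.ofReal (1 / K) ≤ ENNReal.ofReal (1 / (n * T)) := by
    rw [← ENNReal.ofReal_natCast, ← ENNReal.ofReal_mul (Nat.cast_nonneg _)]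
    refine ENNReal.ofReal_le_ofReal ?_
    calc ((k - 1 : ℕ) : ℝ) * (1 / K) ≤ k * (1 / K) := by gcongr; exact_mod_cast Nat.sub_le k 1
      _ = 1 / (n * T) := by simp only [K]; field_simp
  calc eVariationOn g (Ioo 0 T) ≤ ∑ i ∈ Finset.range (k - 1), edist (c i) (c (i + 1)) :=
        eVariationOn_le_sum_edist_of_eq_on_cells hD hgc
    _ ≤ eVariationOn f (Ioo 0 T) + (k - 1 : ℕ) * ENNReal.ofReal (1 / K) :=
        sum_edist_le_eVariationOn_add hmono.monotoneOn hs fun i hi => by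
          simpa only [add_div] using hfs i hi
    _ ≤ eVariationOn f (Ioo 0 T) + ENNReal.ofReal (1 / (n * T)) := by gcongr

theorem stmt3 {T : ℝ} (hT : 0 < T) (f : ℝ → ℝ)
    (hnonneg : ∀ t ∈ Set.Ioo 0 T, 0 ≤ f t)
    (hbdd : ∃ M : ℝ, ∀ t ∈ Set.Ioo 0 T, f t ≤ M)
    (hcadlag : ∀ t ∈ Set.Ioo 0 T,
      ContinuousWithinAt f (Set.Ici t) t ∧ ∃ l : ℝ, Tendsto f (nhdsWithin t (Set.Iio t)) (nhds l))
    (hBV : BoundedVariationOn f (Set.Ioo 0 T))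
    (n k : ℕ) (hn : 1 ≤ n) (hk : 1 ≤ k) (t : ℕ → ℝ)
    (ht0 : t 0 = 0) (htk : t k = T) (hmono : StrictMonoOn t (Set.Iic k))
    (hosc : ∀ i < k, ∀ s ∈ Set.Ioo 0 T, ∀ u ∈ Set.Ioo 0 T,
      s ∈ Set.Ico (t i) (t (i+1)) → u ∈ Set.Ico (t i) (t (i+1)) →
      |f s - f u| ≤ 1 / (n * T))
    (g : ℝ → ℝ)
    (hg : ∀ i < k, ∀ s ∈ Set.Ioo 0 T, s ∈ Set.Ico (t i) (t (i+1)) →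
      g s = (1 / (k * n * T)) *
        (sSup {j : ℕ | ∀ u ∈ Set.Ioo 0 T, u ∈ Set.Ico (t i) (t (i+1)) →
          (j : ℝ) / (k * n * T) ≤ f u} : ℕ)) :
    eVariationOn g (Set.Ioo 0 T) ≤ eVariationOn f (Set.Ioo 0 T) + ENNReal.ofReal (1 / (n * T)) :=
  stmt3_general hT f hnonneg n k hn hk t ht0 htk hmono g hg
end

section
/- Let X be a stationary process on [0,T] whose supremum location density f_{X,T} (a right-continuous version on (0,T)) satisfies the monotonicity property of Lemma 2.1: for 0 ≤ Δ < T and 0 ≤ δ ≤ Δ, f_{X,T−Δ}(t) ≥ f_{X,T}(t+δ) a.e. on (0, T−Δ). If the law of τ_{X,T}/T converges weakly to the uniform distribution on (0,1) as T → ∞, then for every 0 < ε < 1/2, sup_{ε ≤ t ≤ 1−ε} |T f_{X,T}(tT) − 1| → 0 as T → ∞. -/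
open MeasureTheory Filter Set Topology

lemma stmt7_meas (f : ℝ → ℝ → ℝ)
    (hrc : ∀ T > (0:ℝ), ∀ t ∈ Set.Ioo (0:ℝ) T, ContinuousWithinAt (f T) (Set.Ici t) t)
    {R : ℝ} (hR : 0 < R) :
    AEMeasurable (f R) (volume.restrict (Set.Ioo (0:ℝ) R)) := by
  have hmeas : ∀ n : ℕ, Measurable (fun t : ℝ => f R ((⌈(n+1 : ℝ) * t⌉ : ℝ) / (n+1))) := by
    intro n
    have h1 : Measurable fun t : ℝ => (⌈(n+1:ℝ) * t⌉ : ℤ) :=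
      Int.measurable_ceil.comp (measurable_const.mul measurable_id)
    exact (Measurable.of_discrete (f := fun k : ℤ => f R ((k:ℝ)/(n+1)))).comp h1
  have hlim : ∀ t ∈ Set.Ioo (0:ℝ) R,
      Tendsto (fun n : ℕ => f R ((⌈(n+1 : ℝ) * t⌉ : ℝ) / (n+1))) atTop (nhds (f R t)) := by
    intro t ht
    have hc : ∀ n : ℕ, (0:ℝ) < n + 1 := fun n => by positivity
    have hge : ∀ n : ℕ, t ≤ (⌈(n+1 : ℝ) * t⌉ : ℝ) / (n+1) := by
      intro n
      rw [le_div_iff₀ (hc n)]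
      simpa [mul_comm] using Int.le_ceil ((n+1:ℝ) * t)
    have hle : ∀ n : ℕ, (⌈(n+1 : ℝ) * t⌉ : ℝ) / (n+1) ≤ t + 1/(n+1) := by
      intro n
      rw [div_le_iff₀ (hc n)]
      have := (Int.ceil_lt_add_one ((n+1:ℝ) * t)).le
      calc ((⌈(n+1 : ℝ) * t⌉ : ℝ)) ≤ (n+1:ℝ)*t + 1 := this
        _ = (t + 1/(n+1)) * (n+1) := by field_simp
    have h2 : Tendsto (fun n : ℕ => (⌈(n+1 : ℝ) * t⌉ : ℝ) / (n+1)) atTop (nhds t) := by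
      refine tendsto_of_tendsto_of_tendsto_of_le_of_le tendsto_const_nhds ?_ hge hle
      have : Tendsto (fun n : ℕ => t + 1/(n+1:ℝ)) atTop (nhds (t + 0)) :=
        tendsto_const_nhds.add tendsto_one_div_add_atTop_nhds_zero_nat
      simpa using this
    have h3 : Tendsto (fun n : ℕ => (⌈(n+1 : ℝ) * t⌉ : ℝ) / (n+1)) atTop
        (nhdsWithin t (Set.Ici t)) :=
      tendsto_nhdsWithin_of_tendsto_nhds_of_eventually_within _ h2
        (Filter.Eventually.of_forall hge)
    exact ((hrc R hR t ht).tendsto).comp h3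
  exact aemeasurable_of_tendsto_metrizable_ae atTop (fun n => (hmeas n).aemeasurable)
    ((ae_restrict_iff' measurableSet_Ioo).2 (Filter.Eventually.of_forall hlim))

lemma stmt7_ii (f : ℝ → ℝ → ℝ)
    (hnonneg : ∀ T > (0:ℝ), ∀ t, 0 ≤ f T t)
    (hbound : ∀ T > (0:ℝ), ∀ t ∈ Set.Ioo (0:ℝ) T, f T t ≤ max (1/t) (1/(T-t)))
    (hrc : ∀ T > (0:ℝ), ∀ t ∈ Set.Ioo (0:ℝ) T, ContinuousWithinAt (f T) (Set.Ici t) t)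
    {R c d : ℝ} (hR : 0 < R) (hc : 0 < c) (hcd : c ≤ d) (hd : d < R) :
    IntervalIntegrable (f R) volume c d := by
  rw [intervalIntegrable_iff_integrableOn_Ioc_of_le hcd]
  have hsub : Set.Ioc c d ⊆ Set.Ioo 0 R := fun x hx => ⟨hc.trans hx.1, lt_of_le_of_lt hx.2 hd⟩
  have hmeas : AEStronglyMeasurable (f R) (volume.restrict (Set.Ioc c d)) :=
    ((stmt7_meas f hrc hR).mono_measure (Measure.restrict_mono hsub le_rfl)).aestronglyMeasurable
  refine Integrable.mono' (g := fun _ => max (1/c) (1/(R-d)))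
    (integrableOn_const measure_Ioc_lt_top.ne) hmeas ?_
  refine (ae_restrict_iff' measurableSet_Ioc).2 (Filter.Eventually.of_forall fun x hx => ?_)
  rw [Real.norm_eq_abs, abs_of_nonneg (hnonneg R hR x)]
  refine (hbound R hR x (hsub hx)).trans (max_le_max ?_ ?_)
  · exact one_div_le_one_div_of_le hc hx.1.le
  · exact one_div_le_one_div_of_le (by linarith) (by linarith [hx.2])

lemma stmt7_avg (f : ℝ → ℝ → ℝ)
    (hnonneg : ∀ T > (0:ℝ), ∀ t, 0 ≤ f T t)
    (hbound : ∀ T > (0:ℝ), ∀ t ∈ Set.Ioo (0:ℝ) T, f T t ≤ max (1/t) (1/(T-t)))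
    (hrc : ∀ T > (0:ℝ), ∀ t ∈ Set.Ioo (0:ℝ) T, ContinuousWithinAt (f T) (Set.Ici t) t)
    {R t : ℝ} (hR : 0 < R) (ht : t ∈ Set.Ioo 0 R) :
    Tendsto (fun n : ℕ => (n+1 : ℝ) * ∫ x in t..(t + 1/(n+1)), f R x) atTop
      (nhds (f R t)) := by
  refine Metric.tendsto_atTop.2 fun ε hε => ?_
  obtain ⟨η, hη, hcont⟩ := Metric.continuousWithinAt_iff.1 (hrc R hR t ht) (ε/2) (by linarith)
  obtain ⟨N, hN⟩ := exists_nat_gt (max (1/η) (1/(R - t)))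
  refine ⟨N, fun n hn => ?_⟩
  have hc : (0:ℝ) < n + 1 := by positivity
  set h : ℝ := 1/(n+1) with hh
  have hpos : 0 < h := by positivity
  have hNn : max (1/η) (1/(R-t)) < (n:ℝ) + 1 := hN.trans_le (by have : (N:ℝ) ≤ n := Nat.cast_le.2 hn; linarith)
  have hRt : 0 < R - t := by linarith [ht.2]
  have hlt1 : h < η := by
    rw [hh, div_lt_iff₀ hc]
    have h1 : 1/η < n+1 := (le_max_left _ _).trans_lt hNn
    calc (1:ℝ) = η * (1/η) := by field_simp
      _ < η * (n+1) := by exact mul_lt_mul_of_pos_left h1 hη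
      _ = η * (n+1) := rfl
  have hlt2 : h < R - t := by
    rw [hh, div_lt_iff₀ hc]
    have h1 : 1/(R-t) < n+1 := (le_max_right _ _).trans_lt hNn
    calc (1:ℝ) = (R-t) * (1/(R-t)) := by field_simp
      _ < (R-t) * (n+1) := mul_lt_mul_of_pos_left h1 hRt
  have hint : IntervalIntegrable (f R) volume t (t + h) :=
    stmt7_ii f hnonneg hbound hrc hR ht.1 (by linarith) (by linarith)
  have hbd : ∀ x ∈ Set.Icc t (t+h), |f R x - f R t| ≤ ε/2 := by
    intro x hx
    have : dist (f R x) (f R t) < ε/2 := by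
      refine hcont hx.1 ?_
      rw [Real.dist_eq, abs_of_nonneg (by linarith [hx.1])]
      linarith [hx.2]
    rw [Real.dist_eq] at this; linarith
  have hup : ∫ x in t..(t+h), f R x ≤ (f R t + ε/2) * h := by
    have h1 := intervalIntegral.integral_mono_on (by linarith : t ≤ t + h) hint
      (intervalIntegrable_const (c := f R t + ε/2)) (fun x hx => by linarith [abs_le.1 (hbd x hx)])
    have h2 : (∫ _x in t..(t+h), (f R t + ε/2)) = (f R t + ε/2) * h := by
      rw [intervalIntegral.integral_const, smul_eq_mul]; ring
    rw [h2] at h1; exact h1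
  have hlo : (f R t - ε/2) * h ≤ ∫ x in t..(t+h), f R x := by
    have h1 := intervalIntegral.integral_mono_on (by linarith : t ≤ t + h)
      (intervalIntegrable_const (c := f R t - ε/2)) hint (fun x hx => by linarith [abs_le.1 (hbd x hx)])
    have h2 : (∫ _x in t..(t+h), (f R t - ε/2)) = (f R t - ε/2) * h := by
      rw [intervalIntegral.integral_const, smul_eq_mul]; ring
    rw [h2] at h1; exact h1
  rw [Real.dist_eq, abs_lt]
  have hmul : ((n:ℝ)+1) * h = 1 := by rw [hh]; field_simp
  have hu2 := mul_le_mul_of_nonneg_left hup (le_of_lt hc)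
  have hl2 := mul_le_mul_of_nonneg_left hlo (le_of_lt hc)
  have he1 : ((n:ℝ)+1) * ((f R t + ε/2) * h) = f R t + ε/2 := by
    rw [show ((n:ℝ)+1) * ((f R t + ε/2) * h) = (f R t + ε/2) * (((n:ℝ)+1) * h) by ring, hmul,
      mul_one]
  have he2 : ((n:ℝ)+1) * ((f R t - ε/2) * h) = f R t - ε/2 := by
    rw [show ((n:ℝ)+1) * ((f R t - ε/2) * h) = (f R t - ε/2) * (((n:ℝ)+1) * h) by ring, hmul,
      mul_one]
  rw [he1] at hu2; rw [he2] at hl2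
  constructor
  · linarith
  · linarith

lemma stmt7_ptwise (f : ℝ → ℝ → ℝ)
    (hnonneg : ∀ T > (0:ℝ), ∀ t, 0 ≤ f T t)
    (hbound : ∀ T > (0:ℝ), ∀ t ∈ Set.Ioo (0:ℝ) T, f T t ≤ max (1/t) (1/(T-t)))
    (hrc : ∀ T > (0:ℝ), ∀ t ∈ Set.Ioo (0:ℝ) T, ContinuousWithinAt (f T) (Set.Ici t) t)
    (hmono : ∀ T > (0:ℝ), ∀ Δ ∈ Set.Ico (0:ℝ) T, ∀ δ ∈ Set.Icc (0:ℝ) Δ,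
      ∀ᵐ t ∂(volume.restrict (Set.Ioo (0:ℝ) (T - Δ))), f T (t + δ) ≤ f (T - Δ) t) :
    ∀ T > (0:ℝ), ∀ Δ ∈ Set.Ico (0:ℝ) T, ∀ δ ∈ Set.Icc (0:ℝ) Δ, ∀ t ∈ Set.Ioo (0:ℝ) (T - Δ),
      f T (t + δ) ≤ f (T - Δ) t := by
  intro T hT Δ hΔ δ hδ t ht
  have hS : (0:ℝ) < T - Δ := by linarith [hΔ.2]
  have htδ : t + δ ∈ Set.Ioo (0:ℝ) T := by
    constructor
    · linarith [ht.1, hδ.1]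
    · linarith [ht.2, hδ.2]
  have hA := stmt7_avg f hnonneg hbound hrc hS ht
  have hB := stmt7_avg f hnonneg hbound hrc hT htδ
  have hae := hmono T hT Δ hΔ δ hδ
  -- rewrite B's integral as a shifted integral so we can compare
  have hsmall : ∀ᶠ n : ℕ in atTop, (1:ℝ)/(n+1) < (T - Δ) - t := by
    have h0 : Tendsto (fun n : ℕ => (1:ℝ)/(n+1)) atTop (nhds 0) :=
      tendsto_one_div_add_atTop_nhds_zero_nat
    exact h0.eventually_lt_const (by linarith [ht.2])
  refine le_of_tendsto_of_tendsto hB hA ?_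
  filter_upwards [hsmall] with n hn
  have hc : (0:ℝ) < (n:ℝ) + 1 := by positivity
  set h : ℝ := 1/((n:ℝ)+1) with hh
  have hpos : 0 < h := by positivity
  have hth : t + h < T - Δ := by linarith
  -- interval integrability
  have hintS : IntervalIntegrable (f (T-Δ)) volume t (t+h) :=
    stmt7_ii f hnonneg hbound hrc hS ht.1 (by linarith) hth
  have hintT : IntervalIntegrable (f T) volume (t+δ) (t+δ+h) :=
    stmt7_ii f hnonneg hbound hrc hT htδ.1 (by linarith) (by linarith [hδ.2])
  have hintT' : IntervalIntegrable (fun x => f T (x + δ)) volume t (t+h) := by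
    have h2 := hintT.comp_add_right δ
    have e1 : t + δ - δ = t := by ring
    have e2 : t + δ + h - δ = t + h := by ring
    rwa [e1, e2] at h2
  -- a.e. inequality on the restricted interval
  have hae2 : ∀ᵐ x ∂(volume.restrict (Set.Icc t (t+h))), f T (x + δ) ≤ f (T-Δ) x := by
    refine ae_restrict_of_ae_restrict_of_subset ?_ hae
    intro x hx
    exact ⟨lt_of_lt_of_le ht.1 hx.1, lt_of_le_of_lt hx.2 hth⟩
  have hcomp : (∫ x in t..(t+h), f T (x + δ)) ≤ ∫ x in t..(t+h), f (T-Δ) x :=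
    intervalIntegral.integral_mono_ae_restrict (by linarith) hintT' hintS hae2
  have hshift : (∫ x in t..(t+h), f T (x + δ)) = ∫ x in (t+δ)..(t+δ+h), f T x := by
    rw [intervalIntegral.integral_comp_add_right (f T) δ]
    congr 1
    ring
  refine mul_le_mul_of_nonneg_left ?_ hc.le
  rw [← hshift]
  exact hcomp

lemma stmt7_UL (f : ℝ → ℝ → ℝ)
    (hnonneg : ∀ T > (0:ℝ), ∀ t, 0 ≤ f T t)
    (hbound : ∀ T > (0:ℝ), ∀ t ∈ Set.Ioo (0:ℝ) T, f T t ≤ max (1/t) (1/(T-t)))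
    (hrc : ∀ T > (0:ℝ), ∀ t ∈ Set.Ioo (0:ℝ) T, ContinuousWithinAt (f T) (Set.Ici t) t)
    (hmono : ∀ T > (0:ℝ), ∀ Δ ∈ Set.Ico (0:ℝ) T, ∀ δ ∈ Set.Icc (0:ℝ) Δ,
      ∀ᵐ t ∂(volume.restrict (Set.Ioo (0:ℝ) (T - Δ))), f T (t + δ) ≤ f (T - Δ) t) :
    ∀ T > (0:ℝ), ∀ Δ, 0 < Δ → Δ < T → ∀ t ∈ Set.Ioo (0:ℝ) (T - Δ),
      ((∫ x in t..(t+Δ), f T x) ≤ Δ * f (T-Δ) t ∧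
       ∀ s, t + Δ ≤ s → s < T - Δ → Δ * f T s ≤ ∫ x in (s-Δ)..s, f (T-Δ) x) := by
  intro T hT Δ hΔ0 hΔT t ht
  have hS : (0:ℝ) < T - Δ := by linarith
  have hΔmem : Δ ∈ Set.Ico (0:ℝ) T := ⟨hΔ0.le, hΔT⟩
  constructor
  · -- lower-bound form: ∫_{t}^{t+Δ} f T ≤ Δ f_{T-Δ}(t)
    have hint : IntervalIntegrable (f T) volume t (t+Δ) :=
      stmt7_ii f hnonneg hbound hrc hT ht.1 (by linarith) (by linarith [ht.2])
    have h1 := intervalIntegral.integral_mono_on (by linarith : t ≤ t + Δ) hint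
      (intervalIntegrable_const (c := f (T-Δ) t)) (fun x hx => by
        have hx1 : x = t + (x - t) := by ring
        rw [hx1]
        exact stmt7_ptwise f hnonneg hbound hrc hmono T hT Δ hΔmem (x - t)
          ⟨by linarith [hx.1], by linarith [hx.2]⟩ t ht)
    rw [intervalIntegral.integral_const, smul_eq_mul] at h1
    calc (∫ x in t..(t+Δ), f T x) ≤ (t + Δ - t) * f (T-Δ) t := h1
      _ = Δ * f (T-Δ) t := by ring
  · intro s hs1 hs2
    have hint : IntervalIntegrable (f (T-Δ)) volume (s-Δ) s :=
      stmt7_ii f hnonneg hbound hrc hS (by linarith [ht.1]) (by linarith) hs2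
    have h1 := intervalIntegral.integral_mono_on (by linarith : s - Δ ≤ s)
      (intervalIntegrable_const (c := f T s)) hint (fun x hx => by
        have hx1 : s = x + (s - x) := by ring
        rw [hx1]
        exact stmt7_ptwise f hnonneg hbound hrc hmono T hT Δ hΔmem (s - x)
          ⟨by linarith [hx.2], by linarith [hx.1]⟩ x
          ⟨by linarith [hx.1, ht.1], by linarith [hx.2]⟩)
    rw [intervalIntegral.integral_const, smul_eq_mul] at h1
    calc Δ * f T s = (s - (s - Δ)) * f T s := by ring
      _ ≤ ∫ x in (s-Δ)..s, f (T-Δ) x := h1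

lemma stmt7_K {Ω : Type*} [MeasurableSpace Ω] (P : Measure Ω) (τ : ℝ → Ω → ℝ) (f : ℝ → ℝ → ℝ)
    (hnonneg : ∀ T > (0:ℝ), ∀ t, 0 ≤ f T t)
    (hdens : ∀ T > (0:ℝ), ∀ B ⊆ Set.Ioo (0:ℝ) T, MeasurableSet B →
      P {ω | τ T ω ∈ B} = ENNReal.ofReal (∫ t in B, f T t))
    (hweak : ∀ a b : ℝ, 0 ≤ a → a ≤ b → b ≤ 1 →
      Tendsto (fun T => (P {ω | τ T ω / T ∈ Set.Ioo a b}).toReal) atTop (nhds (b - a)))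
    {a b : ℝ} (ha : 0 < a) (hab : a ≤ b) (hb : b < 1) :
    Tendsto (fun R => ∫ x in (a*R)..(b*R), f R x) atTop (nhds (b - a)) := by
  refine (hweak a b ha.le hab hb.le).congr' ?_
  filter_upwards [eventually_gt_atTop (0:ℝ)] with R hR
  have hset : {ω | τ R ω / R ∈ Set.Ioo a b} = {ω | τ R ω ∈ Set.Ioo (a*R) (b*R)} := by
    ext ω
    simp only [Set.mem_setOf_eq, Set.mem_Ioo]
    rw [lt_div_iff₀ hR, div_lt_iff₀ hR]
  have hsub : Set.Ioo (a*R) (b*R) ⊆ Set.Ioo 0 R := by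
    intro x hx
    constructor
    · have : 0 < a * R := by positivity
      linarith [hx.1]
    · have : b * R ≤ R := by nlinarith
      linarith [hx.2]
  have hd := hdens R hR (Set.Ioo (a*R) (b*R)) hsub measurableSet_Ioo
  rw [hset, hd]
  have hnn : 0 ≤ ∫ t in Set.Ioo (a*R) (b*R), f R t :=
    setIntegral_nonneg measurableSet_Ioo (fun x _ => hnonneg R hR x)
  rw [ENNReal.toReal_ofReal hnn]
  rw [intervalIntegral.integral_of_le (by nlinarith : a*R ≤ b*R),
    MeasureTheory.integral_Ioc_eq_integral_Ioo]

lemma stmt7_Kmono (f : ℝ → ℝ → ℝ)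
    (hnonneg : ∀ T > (0:ℝ), ∀ t, 0 ≤ f T t)
    (hbound : ∀ T > (0:ℝ), ∀ t ∈ Set.Ioo (0:ℝ) T, f T t ≤ max (1/t) (1/(T-t)))
    (hrc : ∀ T > (0:ℝ), ∀ t ∈ Set.Ioo (0:ℝ) T, ContinuousWithinAt (f T) (Set.Ici t) t)
    {R c d c' d' : ℝ} (hR : 0 < R) (hc' : 0 < c') (hcc : c' ≤ c) (hcd : c ≤ d) (hdd : d ≤ d')
    (hd' : d' < R) :
    (∫ x in c..d, f R x) ≤ ∫ x in c'..d', f R x := by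
  have i1 : IntervalIntegrable (f R) volume c' c :=
    stmt7_ii f hnonneg hbound hrc hR hc' hcc (by linarith)
  have i2 : IntervalIntegrable (f R) volume c d :=
    stmt7_ii f hnonneg hbound hrc hR (by linarith) hcd (by linarith)
  have i3 : IntervalIntegrable (f R) volume d d' :=
    stmt7_ii f hnonneg hbound hrc hR (by linarith) hdd hd'
  have n1 : 0 ≤ ∫ x in c'..c, f R x :=
    intervalIntegral.integral_nonneg hcc (fun u _ => hnonneg R hR u)
  have n3 : 0 ≤ ∫ x in d..d', f R x :=
    intervalIntegral.integral_nonneg hdd (fun u _ => hnonneg R hR u)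
  have add1 := intervalIntegral.integral_add_adjacent_intervals i1 i2
  have add2 := intervalIntegral.integral_add_adjacent_intervals (i1.trans i2) i3
  linarith [add1, add2]

set_option maxHeartbeats 2000000 in
lemma stmt7_grid {Ω : Type*} [MeasurableSpace Ω] (P : Measure Ω) (τ : ℝ → Ω → ℝ) (f : ℝ → ℝ → ℝ)
    (hnonneg : ∀ T > (0:ℝ), ∀ t, 0 ≤ f T t)
    (hbound : ∀ T > (0:ℝ), ∀ t ∈ Set.Ioo (0:ℝ) T, f T t ≤ max (1/t) (1/(T-t)))
    (hrc : ∀ T > (0:ℝ), ∀ t ∈ Set.Ioo (0:ℝ) T, ContinuousWithinAt (f T) (Set.Ici t) t)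
    (hdens : ∀ T > (0:ℝ), ∀ B ⊆ Set.Ioo (0:ℝ) T, MeasurableSet B →
      P {ω | τ T ω ∈ B} = ENNReal.ofReal (∫ t in B, f T t))
    (hweak : ∀ a b : ℝ, 0 ≤ a → a ≤ b → b ≤ 1 →
      Tendsto (fun T => (P {ω | τ T ω / T ∈ Set.Ioo a b}).toReal) atTop (nhds (b - a)))
    {α β η : ℝ} (hα : 0 < α) (hαβ : α < β) (hβ : β < 1) (hη : 0 < η) :
    ∀ᶠ R in atTop, ∀ a b, α ≤ a → a ≤ b → b ≤ β →
      |(∫ x in (a*R)..(b*R), f R x) - (b - a)| ≤ η := by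
  obtain ⟨N, hN⟩ := exists_nat_gt (max ((β - α)/(η/4)) ((β - α)/(1 - β)))
  have hNpos : (0:ℝ) < N + 1 := by positivity
  set m : ℝ := (β - α)/(N+1) with hm
  have hβα : 0 < β - α := by linarith
  have hmpos : 0 < m := by positivity
  have hm1 : m < η/4 := by
    rw [hm, div_lt_iff₀ hNpos]
    have h1 : (β-α)/(η/4) < N := lt_of_le_of_lt (le_max_left _ _) hN
    rw [div_lt_iff₀ (by linarith : (0:ℝ) < η/4)] at h1
    nlinarith
  have hm2 : m < 1 - β := by
    rw [hm, div_lt_iff₀ hNpos]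
    have h1 : (β-α)/(1-β) < N := lt_of_le_of_lt (le_max_right _ _) hN
    rw [div_lt_iff₀ (by linarith : (0:ℝ) < 1 - β)] at h1
    nlinarith
  obtain ⟨x, hxdef⟩ : ∃ x : ℕ → ℝ, ∀ i : ℕ, x i = α + i * m :=
    ⟨fun i => α + i * m, fun _ => rfl⟩
  have hxα : ∀ i : ℕ, α ≤ x i := fun i => by
    have h0 : (0:ℝ) ≤ i * m := by positivity
    rw [hxdef]; linarith
  have hxlt1 : ∀ i ∈ Finset.range (N+3), x i < 1 := by
    intro i hi
    have hiN : (i:ℝ) ≤ N+2 := by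
      have := Finset.mem_range.1 hi
      exact_mod_cast Nat.lt_succ_iff.1 this
    have : x i ≤ α + (N+2)*m := by
      rw [hxdef]
      have := mul_le_mul_of_nonneg_right hiN hmpos.le
      linarith
    have hNm : (N+1)*m = β - α := by rw [hm]; field_simp
    nlinarith
  have hxmono : ∀ i j : ℕ, i ≤ j → x i ≤ x j := by
    intro i j hij
    rw [hxdef, hxdef]
    have : (i:ℝ) ≤ j := by exact_mod_cast hij
    nlinarith
  have hgrid : ∀ᶠ R in atTop, ∀ i ∈ Finset.range (N+3),
      |(∫ u in (α*R)..(x i*R), f R u) - (x i - α)| < η/4 := by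
    rw [Filter.eventually_all_finset]
    intro i hi
    have conv := stmt7_K P τ f hnonneg hdens hweak hα (hxα i) (hxlt1 i hi)
    filter_upwards [conv (Metric.ball_mem_nhds _ (by linarith : (0:ℝ) < η/4))] with R hR
    have h2 := Metric.mem_ball.1 hR
    rw [Real.dist_eq] at h2
    exact h2
  filter_upwards [hgrid, eventually_gt_atTop (0:ℝ)] with R hg hR
  intro a b haα hab hbβ
  have hapos : 0 < a := lt_of_lt_of_le hα haα
  set i : ℕ := ⌊(a-α)/m⌋₊ with hi
  set j : ℕ := ⌊(b-α)/m⌋₊ with hj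
  have hia : x i ≤ a := by
    have h1 : (i:ℝ) ≤ (a-α)/m := Nat.floor_le (div_nonneg (by linarith) hmpos.le)
    rw [le_div_iff₀ hmpos] at h1
    rw [hxdef]; linarith
  have hai : a < x (i+1) := by
    have h1 : (a-α)/m < i+1 := Nat.lt_floor_add_one _
    rw [div_lt_iff₀ hmpos] at h1
    rw [hxdef]; push_cast; linarith
  have hjb : x j ≤ b := by
    have h1 : (j:ℝ) ≤ (b-α)/m := Nat.floor_le (div_nonneg (by linarith) hmpos.le)
    rw [le_div_iff₀ hmpos] at h1
    rw [hxdef]; linarith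
  have hbj : b < x (j+1) := by
    have h1 : (b-α)/m < j+1 := Nat.lt_floor_add_one _
    rw [div_lt_iff₀ hmpos] at h1
    rw [hxdef]; push_cast; linarith
  have hij : i ≤ j := Nat.floor_le_floor (by gcongr <;> linarith)
  have hjN : j ≤ N+1 := by
    have h1 : (b-α)/m ≤ (N+1:ℕ) := by
      push_cast
      rw [div_le_iff₀ hmpos]
      have hNm : (N+1)*m = β - α := by rw [hm]; field_simp
      nlinarith
    calc j = ⌊(b-α)/m⌋₊ := hj
      _ ≤ ⌊((N+1:ℕ):ℝ)⌋₊ := Nat.floor_le_floor h1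
      _ = N+1 := Nat.floor_natCast _
  have hmemi : i ∈ Finset.range (N+3) := Finset.mem_range.2 (by omega)
  have hmemi1 : i+1 ∈ Finset.range (N+3) := Finset.mem_range.2 (by omega)
  have hmemj : j ∈ Finset.range (N+3) := Finset.mem_range.2 (by omega)
  have hmemj1 : j+1 ∈ Finset.range (N+3) := Finset.mem_range.2 (by omega)
  have hxi1 : x (i+1) = x i + m := by rw [hxdef, hxdef]; push_cast; ring
  have hxj1 : x (j+1) = x j + m := by rw [hxdef, hxdef]; push_cast; ring
  -- additivity helper
  have hadd : ∀ p q : ℕ, p ∈ Finset.range (N+3) → q ∈ Finset.range (N+3) → p ≤ q →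
      (∫ u in (α*R)..(x p*R), f R u) + (∫ u in (x p*R)..(x q*R), f R u)
        = ∫ u in (α*R)..(x q*R), f R u := by
    intro p q hp hq hpq
    have hxp1 : x p < 1 := hxlt1 p hp
    have hxq1 : x q < 1 := hxlt1 q hq
    have i1 : IntervalIntegrable (f R) volume (α*R) (x p*R) :=
      stmt7_ii f hnonneg hbound hrc hR (by positivity)
        (mul_le_mul_of_nonneg_right (hxα p) hR.le) (by nlinarith)
    have i2 : IntervalIntegrable (f R) volume (x p*R) (x q*R) :=
      stmt7_ii f hnonneg hbound hrc hR (by nlinarith [hxα p])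
        (mul_le_mul_of_nonneg_right (hxmono p q hpq) hR.le) (by nlinarith)
    exact intervalIntegral.integral_add_adjacent_intervals i1 i2
  have hgi := abs_lt.1 (hg i hmemi)
  have hgi1 := abs_lt.1 (hg (i+1) hmemi1)
  have hgj := abs_lt.1 (hg j hmemj)
  have hgj1 := abs_lt.1 (hg (j+1) hmemj1)
  -- upper bound
  have hup : (∫ u in (a*R)..(b*R), f R u) ≤ b - a + η := by
    have h1 : (∫ u in (a*R)..(b*R), f R u) ≤ ∫ u in (x i*R)..(x (j+1)*R), f R u := by
      apply stmt7_Kmono f hnonneg hbound hrc hR (by nlinarith [hxα i])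
        (mul_le_mul_of_nonneg_right hia hR.le)
        (mul_le_mul_of_nonneg_right hab hR.le)
        (mul_le_mul_of_nonneg_right (le_of_lt hbj) hR.le)
      nlinarith [hxlt1 (j+1) hmemj1]
    have h2 := hadd i (j+1) hmemi hmemj1 (by omega)
    have hxb : x (j+1) ≤ b + m := by rw [hxj1]; linarith
    have hxa : a - m ≤ x i := by rw [hxi1] at hai; linarith
    linarith
  -- lower bound
  have hlo : b - a - η ≤ ∫ u in (a*R)..(b*R), f R u := by
    rcases le_or_gt (i+1) j with hcase | hcase
    · have h1 : (∫ u in (x (i+1)*R)..(x j*R), f R u) ≤ ∫ u in (a*R)..(b*R), f R u := by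
        apply stmt7_Kmono f hnonneg hbound hrc hR (mul_pos hapos hR)
          (mul_le_mul_of_nonneg_right (le_of_lt hai) hR.le)
          (mul_le_mul_of_nonneg_right (hxmono (i+1) j hcase) hR.le)
          (mul_le_mul_of_nonneg_right hjb hR.le)
        nlinarith
      have h2 := hadd (i+1) j hmemi1 hmemj hcase
      have hxb : b - m ≤ x j := by rw [hxj1] at hbj; linarith
      have hxa : x (i+1) ≤ a + m := by rw [hxi1]; linarith
      linarith
    · have hieqj : i = j := le_antisymm hij (by omega)
      have hba : b - a < m := by
        have hb2 := hbj
        rw [← hieqj, hxi1] at hb2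
        linarith
      have hK0 : 0 ≤ ∫ u in (a*R)..(b*R), f R u :=
        intervalIntegral.integral_nonneg
          (mul_le_mul_of_nonneg_right hab hR.le) (fun u _ => hnonneg R hR u)
      linarith
  exact abs_le.2 ⟨by linarith, by linarith⟩

theorem stmt7 {Ω : Type*} [MeasurableSpace Ω] (P : Measure Ω) [IsProbabilityMeasure P]
    (τ : ℝ → Ω → ℝ) (f : ℝ → ℝ → ℝ)
    (hrange : ∀ T > (0:ℝ), ∀ ω, τ T ω ∈ Set.Icc 0 T)
    (hnonneg : ∀ T > (0:ℝ), ∀ t, 0 ≤ f T t)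
    (hdens : ∀ T > (0:ℝ), ∀ B ⊆ Set.Ioo (0:ℝ) T, MeasurableSet B →
      P {ω | τ T ω ∈ B} = ENNReal.ofReal (∫ t in B, f T t))
    (hbound : ∀ T > (0:ℝ), ∀ t ∈ Set.Ioo (0:ℝ) T, f T t ≤ max (1/t) (1/(T-t)))
    (hrc : ∀ T > (0:ℝ), ∀ t ∈ Set.Ioo (0:ℝ) T, ContinuousWithinAt (f T) (Set.Ici t) t)
    -- Lemma 2.1: monotonicity of the densities
    (hmono : ∀ T > (0:ℝ), ∀ Δ ∈ Set.Ico (0:ℝ) T, ∀ δ ∈ Set.Icc (0:ℝ) Δ,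
      ∀ᵐ t ∂(volume.restrict (Set.Ioo (0:ℝ) (T - Δ))), f T (t + δ) ≤ f (T - Δ) t)
    -- weak convergence of τ_{X,T}/T to the uniform distribution on (0,1)
    (hweak : ∀ a b : ℝ, 0 ≤ a → a ≤ b → b ≤ 1 →
      Tendsto (fun T => (P {ω | τ T ω / T ∈ Set.Ioo a b}).toReal) atTop (nhds (b - a))) :
    ∀ ε ∈ Set.Ioo (0:ℝ) (1/2),
      Tendsto (fun T => sSup ((fun t => |T * f T (t * T) - 1|) '' Set.Icc ε (1 - ε)))
        atTop (nhds 0) := by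
  intro ε hε
  obtain ⟨hε1, hε2⟩ := hε
  refine Metric.tendsto_nhds.2 fun η hη => ?_
  obtain ⟨γ, hγdef⟩ : ∃ γ : ℝ, γ = min (ε/2) (η/8) := ⟨_, rfl⟩
  have hγ : 0 < γ := by rw [hγdef]; exact lt_min (by linarith) (by linarith)
  have hγε : γ ≤ ε/2 := by rw [hγdef]; exact min_le_left _ _
  have hγη : γ ≤ η/8 := by rw [hγdef]; exact min_le_right _ _
  have hγ4 : γ < 1/4 := lt_of_le_of_lt hγε (by linarith)
  have h1γ : (0:ℝ) < 1 - γ := by linarith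
  have h1γ' : (0:ℝ) < 1 + γ := by linarith
  obtain ⟨η₂, hη₂def⟩ : ∃ e : ℝ, e = γ * η / 8 := ⟨_, rfl⟩
  have hη₂ : 0 < η₂ := by rw [hη₂def]; positivity
  have hgrid := stmt7_grid P τ f hnonneg hbound hrc hdens hweak
    (show (0:ℝ) < ε/2 by linarith) (show ε/2 < 1 - ε/2 by linarith)
    (show 1 - ε/2 < 1 by linarith) hη₂
  obtain ⟨R₀, hR₀⟩ := eventually_atTop.1 hgrid
  filter_upwards [eventually_ge_atTop (R₀/(1-γ)), eventually_gt_atTop (0:ℝ)] with T hT1 hT0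
  have hγT : 0 < γ*T := mul_pos hγ hT0
  have hS1 : R₀ ≤ (1-γ)*T := by
    rw [div_le_iff₀ h1γ] at hT1
    linarith
  have hS2 : R₀ ≤ (1+γ)*T := by linarith
  have hεγ : 0 ≤ ε*γ := mul_nonneg hε1.le hγ.le
  have hεγ2 : ε*γ ≤ ε*(1/2) := mul_le_mul_of_nonneg_left (by linarith) hε1.le
  have key : ∀ t ∈ Set.Icc ε (1-ε), |T * f T (t*T) - 1| ≤ η/2 := by
    intro t ht
    obtain ⟨ht1, ht2⟩ := ht
    have hγt : γ < t := lt_of_le_of_lt (by linarith : γ ≤ ε/2) (by linarith)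
    have hsq : γ*γ ≤ γ := mul_le_of_le_one_right hγ.le (by linarith)
    have hsq0 : 0 ≤ γ*γ := mul_nonneg hγ.le hγ.le
    have ht0 : 0 < t := by linarith
    have p1 : 0 < (t-γ)*T := mul_pos (by linarith) hT0
    have p2 : 0 < (1-t)*T := mul_pos (by linarith) hT0
    have p3 : 0 < (1-t-γ)*T := mul_pos (by linarith) hT0
    have p4 : 0 < t*T := mul_pos ht0 hT0
    -- ===== upper bound =====
    have hUL1 := (stmt7_UL f hnonneg hbound hrc hmono T hT0 (γ*T)
      hγT (by linarith) (t*T - γ*T)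
      ⟨by linarith, by linarith⟩).2 (t*T) (by linarith) (by linarith)
    have heqS : T - γ*T = (1-γ)*T := by ring
    have heqa : ((t-γ)/(1-γ))*((1-γ)*T) = t*T - γ*T := by field_simp
    have heqb : (t/(1-γ))*((1-γ)*T) = t*T := by field_simp
    rw [heqS] at hUL1
    have hgr1 := hR₀ ((1-γ)*T) hS1 ((t-γ)/(1-γ)) (t/(1-γ))
      (by rw [le_div_iff₀ h1γ]; linarith)
      (by rw [div_le_div_iff₀ h1γ h1γ]; linarith [hsq, hsq0])
      (by rw [div_le_iff₀ h1γ]; linarith [hεγ])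
    have hdiff : t/(1-γ) - (t-γ)/(1-γ) = γ/(1-γ) := by
      rw [div_sub_div_same]; congr 1; ring
    rw [heqa, heqb, hdiff] at hgr1
    have hgr1' := (abs_le.1 hgr1).2
    have hub : T * f T (t*T) ≤ 1/(1-γ) + η/8 := by
      refine le_of_mul_le_mul_left ?_ hγ
      have e : γ*(1/(1-γ) + η/8) = γ/(1-γ) + η₂ := by
        rw [hη₂def]; field_simp
      calc γ*(T*f T (t*T)) = γ*T*f T (t*T) := by ring
        _ ≤ γ/(1-γ) + η₂ := by linarith
        _ = γ*(1/(1-γ) + η/8) := e.symm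
    have hub2 : T * f T (t*T) - 1 ≤ η/2 := by
      have hγη2 : γ*η ≤ (1/4)*η := mul_le_mul_of_nonneg_right (by linarith) hη.le
      have h8 : 1/(1-γ) ≤ 1 + η/4 := by
        rw [div_le_iff₀ h1γ]
        linarith
      linarith
    -- ===== lower bound =====
    have hUL2 := (stmt7_UL f hnonneg hbound hrc hmono ((1+γ)*T)
      (mul_pos h1γ' hT0) (γ*T) hγT (by linarith) (t*T)
      ⟨by linarith, by linarith⟩).1
    have heqT : (1+γ)*T - γ*T = T := by ring
    have heqa2 : (t/(1+γ))*((1+γ)*T) = t*T := by field_simp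
    have heqb2 : ((t+γ)/(1+γ))*((1+γ)*T) = t*T + γ*T := by field_simp
    rw [heqT] at hUL2
    have hgr2 := hR₀ ((1+γ)*T) hS2 (t/(1+γ)) ((t+γ)/(1+γ))
      (by rw [le_div_iff₀ h1γ']; linarith)
      (by rw [div_le_div_iff₀ h1γ' h1γ']; linarith [hsq0])
      (by rw [div_le_iff₀ h1γ']; linarith)
    have hdiff2 : (t+γ)/(1+γ) - t/(1+γ) = γ/(1+γ) := by
      rw [div_sub_div_same]; congr 1; ring
    rw [heqa2, heqb2, hdiff2] at hgr2
    have hgr2' := (abs_le.1 hgr2).1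
    have hlb : 1 - γ - η/8 ≤ T * f T (t*T) := by
      refine le_of_mul_le_mul_left ?_ hγ
      have hcube : 0 ≤ γ*γ*γ := by positivity
      have h6 : γ*(1-γ) ≤ γ/(1+γ) := by
        rw [le_div_iff₀ h1γ']
        linarith [hcube]
      have e2 : γ*(1-γ-η/8) = γ*(1-γ) - η₂ := by rw [hη₂def]; ring
      calc γ*(1-γ-η/8) = γ*(1-γ) - η₂ := e2
        _ ≤ γ/(1+γ) - η₂ := by linarith
        _ ≤ ∫ x in (t*T)..(t*T + γ*T), f ((1+γ)*T) x := by linarith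
        _ ≤ γ*T * f T (t*T) := hUL2
        _ = γ*(T * f T (t*T)) := by ring
    have hlb2 : -(η/2) ≤ T * f T (t*T) - 1 := by linarith
    exact abs_le.2 ⟨hlb2, hub2⟩
  have h1 : sSup ((fun t => |T * f T (t * T) - 1|) '' Set.Icc ε (1 - ε)) ≤ η/2 := by
    apply Real.sSup_le
    · rintro y ⟨t, ht, rfl⟩
      exact key t ht
    · linarith
  have h2 : 0 ≤ sSup ((fun t => |T * f T (t * T) - 1|) '' Set.Icc ε (1 - ε)) := by
    apply Real.sSup_nonneg
    rintro y ⟨t, ht, rfl⟩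
    exact abs_nonneg _
  rw [Real.dist_eq, sub_zero, abs_of_nonneg h2]
  linarith
end

section
/- Let X be an ergodic stationary process such that for some a ∈ ℝ, P(sup_{t∈[0,1]} X(t) = x) = 0 for all x > a, and P(X(0) > a) > 0. Then sup_{x∈ℝ} P(sup_{t∈[0,T]} X(t) = x) → 0 as T → ∞ (Assumption A holds). -/
/-!
Above the level `a` the supremum over `[0, T]` has no atoms: for `T ≥ 1` it is attained on one
of countably many unit subintervals of `[0, T]`, and by stationarity the supremum over each of
them has the law of the supremum over `[0, 1]`. At or below the level, `P(sup_{[0, T]} X ≤ a)`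
decreases to the probability that `X` stays below `a` forever; that event is invariant up to
null sets, so by ergodicity it has probability `0` or `1`, and `1` is excluded by
`P(X 0 > a) > 0`.
-/

open MeasureTheory Filter Set Topology
open scoped symmDiff

section Semicontinuous

variable {α β : Type*} [TopologicalSpace α] [ConditionallyCompleteLinearOrder β] {f : α → β}
  {K : Set α}

theorem UpperSemicontinuous.exists_iSup_eq (hf : UpperSemicontinuous f) (hK : IsCompact K)
    (hne : K.Nonempty) : ∃ x ∈ K, IsMaxOn f K x ∧ ⨆ y : K, f y = f x := by
  obtain ⟨x, hxK, hmax⟩ := (hf.upperSemicontinuousOn K).exists_isMaxOn hne hK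
  exact ⟨x, hxK, hmax, hmax.iSup_eq hxK⟩

theorem UpperSemicontinuous.iSup_le_iff (hf : UpperSemicontinuous f) (hK : IsCompact K)
    (hne : K.Nonempty) {y : β} : ⨆ x : K, f x ≤ y ↔ ∀ x ∈ K, f x ≤ y := by
  obtain ⟨x, hxK, hmax, hsup⟩ := hf.exists_iSup_eq hK hne
  rw [hsup]
  exact ⟨fun h z hz => (hmax hz).trans h, fun h => h x hxK⟩

theorem UpperSemicontinuous.exists_iSup_eq_iSup_of_cover {ι : Type*} (hf : UpperSemicontinuous f)
    (hK : IsCompact K) (hne : K.Nonempty) {I : ι → Set α} (hIK : ∀ i, I i ⊆ K)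
    (hcover : K ⊆ ⋃ i, I i) : ∃ i, ⨆ x : I i, f x = ⨆ x : K, f x := by
  obtain ⟨x, hxK, hmax, hsup⟩ := hf.exists_iSup_eq hK hne
  obtain ⟨i, hxi⟩ := mem_iUnion.1 (hcover hxK)
  exact ⟨i, ((hmax.on_subset (hIK i)).iSup_eq hxi).trans hsup.symm⟩

end Semicontinuous

theorem iSup_Icc_add_const (g : ℝ → ℝ) (c d : ℝ) :
    ⨆ t : Icc c (c + d), g t = ⨆ s : Icc 0 d, g (s + c) := by
  rw [← sSup_image', ← sSup_image' (f := fun s => g (s + c)), ← image_image g (· + c),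
    image_add_const_Icc, zero_add, add_comm]

theorem Icc_subset_iUnion_unit_Icc (T : ℝ) :
    Icc 0 T ⊆ ⋃ k : ℕ, Icc (min (k : ℝ) (T - 1)) (min (k : ℝ) (T - 1) + 1) := by
  intro t ht
  refine mem_iUnion.2 ⟨⌊t⌋₊, min_le_of_left_le (Nat.floor_le ht.1), ?_⟩
  rcases le_total (⌊t⌋₊ : ℝ) (T - 1) with h | h
  · rw [min_eq_left h]; exact (Nat.lt_floor_add_one t).le
  · rw [min_eq_right h]; linarith [ht.2]

theorem unit_Icc_subset_Icc {T : ℝ} (hT : 1 ≤ T) (k : ℕ) :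
    Icc (min (k : ℝ) (T - 1)) (min (k : ℝ) (T - 1) + 1) ⊆ Icc 0 T :=
  Icc_subset_Icc (le_min k.cast_nonneg (by linarith)) (by linarith [min_le_right (k : ℝ) (T - 1)])

theorem MeasureTheory.MeasurePreserving.measure_preimage_symmDiff_eq_zero {Ω : Type*}
    [MeasurableSpace Ω] {μ : Measure Ω} [IsFiniteMeasure μ] {f : Ω → Ω}
    (hf : MeasurePreserving f μ μ) {A : Set Ω} (hA : MeasurableSet A)
    (h : f ⁻¹' A ⊆ A ∨ A ⊆ f ⁻¹' A) : μ ((f ⁻¹' A) ∆ A) = 0 := by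
  have hmeas : μ (f ⁻¹' A) = μ A := hf.measure_preimage hA.nullMeasurableSet
  refine measure_symmDiff_eq_zero_iff.2 ?_
  rcases h with h | h
  · exact ae_eq_of_subset_of_measure_ge h hmeas.ge (hf.measurable hA).nullMeasurableSet
      (measure_ne_top μ A)
  · exact (ae_eq_of_subset_of_measure_ge h hmeas.le hA.nullMeasurableSet
      (measure_ne_top μ _)).symm

section StationaryProcess

variable {Ω : Type*} {φ : ℝ → Ω → Ω} {X : ℝ → Ω → ℝ}

theorem apply_add_eq_apply_flow (hflow : ∀ s t, φ (s + t) = φ s ∘ φ t)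
    (hX : ∀ t ω, X t ω = X 0 (φ t ω)) (s c : ℝ) (ω : Ω) :
    X (s + c) ω = X s (φ c ω) := by
  rw [hX, hflow, hX s]
  rfl

theorem iSup_Icc_add_one_eq_iSup_flow (hflow : ∀ s t, φ (s + t) = φ s ∘ φ t)
    (hX : ∀ t ω, X t ω = X 0 (φ t ω)) (c : ℝ) (ω : Ω) :
    ⨆ t : Icc c (c + 1), X t ω = ⨆ s : Icc (0 : ℝ) 1, X s (φ c ω) := by
  rw [iSup_Icc_add_const (fun t => X t ω)]
  simp only [apply_add_eq_apply_flow hflow hX]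

variable [MeasurableSpace Ω] {P : Measure Ω}

theorem measure_iSup_Icc_add_one_eq (hflow : ∀ s t, φ (s + t) = φ s ∘ φ t)
    (hmp : ∀ t, MeasurePreserving (φ t) P P) (hX : ∀ t ω, X t ω = X 0 (φ t ω))
    (hmeas : Measurable fun ω => ⨆ t : Icc (0 : ℝ) 1, X t ω) (c x : ℝ) :
    P {ω | ⨆ t : Icc c (c + 1), X t ω = x} = P {ω | ⨆ t : Icc (0 : ℝ) 1, X t ω = x} := by
  simp_rw [iSup_Icc_add_one_eq_iSup_flow hflow hX c]
  exact (hmp c).measure_preimage (hmeas (measurableSet_singleton x)).nullMeasurableSet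

theorem measure_iSup_Icc_eq_zero (hflow : ∀ s t, φ (s + t) = φ s ∘ φ t)
    (hmp : ∀ t, MeasurePreserving (φ t) P P) (hX : ∀ t ω, X t ω = X 0 (φ t ω))
    (husc : ∀ ω, UpperSemicontinuous (fun t => X t ω))
    (hmeas : Measurable fun ω => ⨆ t : Icc (0 : ℝ) 1, X t ω) {x : ℝ}
    (hx : P {ω | ⨆ t : Icc (0 : ℝ) 1, X t ω = x} = 0) {T : ℝ} (hT : 1 ≤ T) :
    P {ω | ⨆ t : Icc (0 : ℝ) T, X t ω = x} = 0 := by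
  set c : ℕ → ℝ := fun k => min (k : ℝ) (T - 1)
  refine measure_mono_null (t := ⋃ k, {ω | ⨆ t : Icc (c k) (c k + 1), X t ω = x}) ?_
    (measure_iUnion_null fun k => ?_)
  · intro ω hω
    obtain ⟨k, hk⟩ := (husc ω).exists_iSup_eq_iSup_of_cover isCompact_Icc
      (nonempty_Icc.2 (by linarith)) (unit_Icc_subset_Icc hT) (Icc_subset_iUnion_unit_Icc T)
    exact mem_iUnion.2 ⟨k, hk.trans hω⟩
  · rw [measure_iSup_Icc_add_one_eq hflow hmp hX hmeas]
    exact hx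

theorem measure_setOf_forall_le_eq_zero [IsProbabilityMeasure P]
    (hflow : ∀ s t, φ (s + t) = φ s ∘ φ t)
    (hmp : ∀ t, MeasurePreserving (φ t) P P) (hX : ∀ t ω, X t ω = X 0 (φ t ω))
    (herg : ∀ A : Set Ω, MeasurableSet A → (∀ t, P (symmDiff (φ t ⁻¹' A) A) = 0) →
      P A = 0 ∨ P A = 1)
    {a : ℝ} (hA : MeasurableSet {ω | ∀ t, 0 ≤ t → X t ω ≤ a})
    (hpos : 0 < P {ω | a < X 0 ω}) : P {ω | ∀ t, 0 ≤ t → X t ω ≤ a} = 0 := by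
  set A := {ω | ∀ t, 0 ≤ t → X t ω ≤ a}
  have hpre : ∀ s, φ s ⁻¹' A = {ω | ∀ u, s ≤ u → X u ω ≤ a} := by
    intro s
    ext ω
    simp only [A, mem_preimage, mem_ofPred_eq, ← apply_add_eq_apply_flow hflow hX]
    exact ⟨fun h u hu => by simpa using h (u - s) (by linarith),
      fun h t ht => h (t + s) (by linarith)⟩
  have hinv : ∀ s, P ((φ s ⁻¹' A) ∆ A) = 0 := by
    intro s
    refine (hmp s).measure_preimage_symmDiff_eq_zero hA ?_
    rw [hpre]
    rcases le_total 0 s with hs | hs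
    · exact .inr fun ω hω u hu => hω u (hs.trans hu)
    · exact .inl fun ω hω t ht => hω t (hs.trans ht)
  have hA_ne_one : P A ≠ 1 := by
    intro h
    have hcompl : P {ω | a < X 0 ω} ≤ P Aᶜ :=
      measure_mono fun ω hω hωA => (hωA 0 le_rfl).not_gt hω
    rw [prob_compl_eq_one_sub hA, h, tsub_self] at hcompl
    exact hpos.not_ge hcompl
  exact (herg A hA hinv).resolve_right hA_ne_one

theorem tendsto_measure_setOf_forall_Icc_le [IsProbabilityMeasure P]
    (hflow : ∀ s t, φ (s + t) = φ s ∘ φ t)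
    (hmp : ∀ t, MeasurePreserving (φ t) P P) (hX : ∀ t ω, X t ω = X 0 (φ t ω))
    (husc : ∀ ω, UpperSemicontinuous (fun t => X t ω))
    (hmeas_sup : ∀ T : ℝ, Measurable fun ω => ⨆ t : Icc (0 : ℝ) T, X t ω)
    (herg : ∀ A : Set Ω, MeasurableSet A → (∀ t, P (symmDiff (φ t ⁻¹' A) A) = 0) →
      P A = 0 ∨ P A = 1)
    {a : ℝ} (hpos : 0 < P {ω | a < X 0 ω}) :
    Tendsto (fun T => P {ω | ∀ t ∈ Icc 0 T, X t ω ≤ a}) atTop (𝓝 0) := by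
  set B : ℝ → Set Ω := fun T => {ω | ∀ t ∈ Icc 0 T, X t ω ≤ a}
  have hB_anti : Antitone B := fun S T hST ω hω t ht => hω t ⟨ht.1, ht.2.trans hST⟩
  have hB_meas (n : ℕ) : MeasurableSet (B n) := by
    have hB : B n = {ω | ⨆ t : Icc (0 : ℝ) n, X t ω ≤ a} := by
      ext ω
      exact ((husc ω).iSup_le_iff isCompact_Icc (nonempty_Icc.2 n.cast_nonneg)).symm
    rw [hB]
    exact hmeas_sup n measurableSet_Iic
  have hB_iInter : ⋂ n : ℕ, B n = {ω | ∀ t, 0 ≤ t → X t ω ≤ a} := by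
    ext ω
    simp only [B, mem_iInter, mem_ofPred_eq]
    refine ⟨fun h t ht => ?_, fun h n t ht => h t ht.1⟩
    obtain ⟨n, hn⟩ := exists_nat_ge t
    exact h n t ⟨ht, hn⟩
  have hB_nat : Tendsto (fun n : ℕ => P (B n)) atTop (𝓝 0) := by
    have h := tendsto_measure_iInter_atTop (fun n => (hB_meas n).nullMeasurableSet)
      (hB_anti.comp_monotone Nat.mono_cast) ⟨0, measure_ne_top P _⟩
    rwa [hB_iInter, measure_setOf_forall_le_eq_zero hflow hmp hX herg
      (hB_iInter ▸ MeasurableSet.iInter hB_meas) hpos] at h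
  refine tendsto_of_tendsto_of_tendsto_of_le_of_le' tendsto_const_nhds
    (hB_nat.comp tendsto_nat_floor_atTop) (.of_forall fun _ => zero_le) ?_
  filter_upwards [eventually_ge_atTop 0] with T hT
  exact measure_mono (hB_anti (Nat.floor_le hT))

end StationaryProcess

theorem stmt13_general {Ω : Type*} [MeasurableSpace Ω] (P : Measure Ω) [IsProbabilityMeasure P]
    (φ : ℝ → Ω → Ω) (X : ℝ → Ω → ℝ)
    (hflow : ∀ s t, φ (s + t) = φ s ∘ φ t)
    (hmp : ∀ t, MeasurePreserving (φ t) P P)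
    (hX : ∀ t ω, X t ω = X 0 (φ t ω))
    -- upper semicontinuous sample paths
    (husc : ∀ ω, UpperSemicontinuous (fun t => X t ω))
    -- the suprema over compact intervals are measurable
    (hmeas_sup : ∀ a b : ℝ, Measurable fun ω => ⨆ t : Set.Icc a b, X t.1 ω)
    -- ergodicity: a.e.-invariant sets are trivial
    (herg : ∀ A : Set Ω, MeasurableSet A → (∀ t, P (symmDiff (φ t ⁻¹' A) A) = 0) →
      P A = 0 ∨ P A = 1)
    (a : ℝ)
    (hatom : ∀ x > a, P {ω | (⨆ t : Set.Icc (0:ℝ) 1, X t.1 ω) = x} = 0)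
    (hpos : 0 < P {ω | a < X 0 ω}) :
    Tendsto (fun T => ⨆ x : ℝ, (P {ω | (⨆ t : Set.Icc (0:ℝ) T, X t.1 ω) = x}).toReal)
      atTop (nhds 0) := by
  have hlow := (ENNReal.tendsto_toReal ENNReal.zero_ne_top).comp
    (tendsto_measure_setOf_forall_Icc_le hflow hmp hX husc (hmeas_sup 0) herg hpos)
  refine squeeze_zero' (.of_forall fun T => Real.iSup_nonneg fun x => ENNReal.toReal_nonneg)
    ?_ hlow
  filter_upwards [eventually_ge_atTop 1] with T hT
  refine Real.iSup_le (fun x => ?_) ENNReal.toReal_nonneg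
  rcases le_or_gt x a with hxa | hxa
  · refine ENNReal.toReal_mono (measure_ne_top P _) (measure_mono fun ω hω t ht => ?_)
    rw [mem_ofPred_eq] at hω
    exact ((husc ω).iSup_le_iff isCompact_Icc (nonempty_Icc.2 (by linarith))).1 (hω ▸ hxa) t ht
  · rw [measure_iSup_Icc_eq_zero hflow hmp hX husc (hmeas_sup 0 1) (hatom x hxa) hT,
      ENNReal.toReal_zero]
    exact ENNReal.toReal_nonneg

theorem stmt13 {Ω : Type*} [MeasurableSpace Ω] (P : Measure Ω) [IsProbabilityMeasure P]
    (φ : ℝ → Ω → Ω) (X : ℝ → Ω → ℝ)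
    (hφ0 : φ 0 = id) (hflow : ∀ s t, φ (s + t) = φ s ∘ φ t)
    (hmp : ∀ t, MeasurePreserving (φ t) P P)
    (hX : ∀ t ω, X t ω = X 0 (φ t ω))
    (hX0 : Measurable (X 0))
    -- upper semicontinuous sample paths
    (husc : ∀ ω, UpperSemicontinuous (fun t => X t ω))
    -- the suprema over compact intervals are measurable
    (hmeas_sup : ∀ a b : ℝ, Measurable fun ω => ⨆ t : Set.Icc a b, X t.1 ω)
    -- ergodicity: a.e.-invariant sets are trivial
    (herg : ∀ A : Set Ω, MeasurableSet A → (∀ t, P (symmDiff (φ t ⁻¹' A) A) = 0) →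
      P A = 0 ∨ P A = 1)
    (a : ℝ)
    (hatom : ∀ x > a, P {ω | (⨆ t : Set.Icc (0:ℝ) 1, X t.1 ω) = x} = 0)
    (hpos : 0 < P {ω | a < X 0 ω}) :
    Tendsto (fun T => ⨆ x : ℝ, (P {ω | (⨆ t : Set.Icc (0:ℝ) T, X t.1 ω) = x}).toReal)
      atTop (nhds 0) :=
  stmt13_general P φ X hflow hmp hX husc hmeas_sup herg a hatom hpos
end

section
/- Let f be a nonnegative càdlàg function on (0,T) with ∫_0^T f < 1, inf f > 0, sup f < ∞, and let f_n = f̃_n + 1/(nT) be approximations with f − 2/(nT) ≤ f̃_n ≤ f. Writing f_n in block form (1/(k_n n T)) ∑_{i=1}^{m_n} 1_{[u_i,v_i)} and d_n = (k_n n T / m_n)(1 − ∫_0^T f_n), one has, for all n large enough, (1 − ∫_0^T f)/(4 sup_{(0,T)} f) ≤ d_n ≤ 2/inf_{(0,T)} f. -/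
open MeasureTheory Filter Set Topology

/-! Pointwise `|f_n - f| ≤ 1/(nT)`, so `inf f_n`, `sup f_n` and `∫ f_n` lie within `O(1/n)` of
`inf f`, `sup f` and `∫ f`. With `q = k_n n T`, the block counts give
`inf f_n · q = B_n ≤ m_n ≤ 3 (B_n + max(L_n, R_n, C_n)) = 3 sup f_n · q`, hence
`(1 - ∫ f_n) / (3 sup f_n) ≤ d_n ≤ (1 - ∫ f_n) / inf f_n`, and for `n` large the two outer
quantities are at least `(1 - ∫ f) / (4 sup f)` and at most `2 / inf f`. -/

section UniformPerturbation

variable {α : Type*} {s : Set α} {f g : α → ℝ} {ε : ℝ}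

theorem sub_le_csInf_image (hs : s.Nonempty) (hf : BddBelow (f '' s))
    (hfg : ∀ x ∈ s, |g x - f x| ≤ ε) : sInf (f '' s) - ε ≤ sInf (g '' s) :=
  le_csInf (hs.image g) <| by
    rintro _ ⟨x, hx, rfl⟩
    linarith [csInf_le hf (mem_image_of_mem f hx), (abs_le.1 (hfg x hx)).1]

theorem csSup_image_le_add (hs : s.Nonempty) (hf : BddAbove (f '' s))
    (hfg : ∀ x ∈ s, |g x - f x| ≤ ε) : sSup (g '' s) ≤ sSup (f '' s) + ε :=
  csSup_le (hs.image g) <| by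
    rintro _ ⟨x, hx, rfl⟩
    linarith [le_csSup hf (mem_image_of_mem f hx), (abs_le.1 (hfg x hx)).2]

theorem abs_setIntegral_sub_le [MeasurableSpace α] {μ : Measure α} (hs : μ s < ⊤)
    (hf : IntegrableOn f s μ) (hg : IntegrableOn g s μ) (hfg : ∀ x ∈ s, |g x - f x| ≤ ε) :
    |∫ x in s, g x ∂μ - ∫ x in s, f x ∂μ| ≤ ε * μ.real s := by
  rw [← integral_sub hg hf]
  exact norm_setIntegral_le_of_norm_le_const hs fun x hx =>
    (Real.norm_eq_abs _).trans_le (hfg x hx)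

end UniformPerturbation

theorem blockCount_bounds {B L R C : ℕ} {q A M : ℝ} (hq : 0 < q) (hA : (B : ℝ) / q = A)
    (hM : ((B : ℝ) + (max L (max R C) : ℕ)) / q = M) :
    A * q ≤ (B + L + R + C : ℕ) ∧ ((B + L + R + C : ℕ) : ℝ) ≤ 3 * M * q := by
  rw [← hA, ← hM, div_mul_cancel₀ _ hq.ne']
  constructor
  · exact_mod_cast (by omega : B ≤ B + L + R + C)
  · rw [mul_div_assoc', div_mul_cancel₀ _ hq.ne']
    exact_mod_cast (by omega : B + L + R + C ≤ 3 * (B + max L (max R C)))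

section Ratio

variable {x q m : ℝ}

theorem div_le_div_mul_of_le_mul {c : ℝ} (hx : 0 ≤ x) (hq : 0 < q) (hm : 0 < m)
    (hmc : m ≤ c * q) : x / c ≤ q / m * x := by
  have hc : 0 < c := pos_of_mul_pos_left (hm.trans_le hmc) hq.le
  rw [div_mul_eq_mul_div, div_le_div_iff₀ hc hm]
  nlinarith

theorem div_mul_le_div_of_mul_le {a : ℝ} (hx : 0 ≤ x) (ha : 0 < a) (hq : 0 < q)
    (ham : a * q ≤ m) : q / m * x ≤ x / a := by
  have hm : 0 < m := (mul_pos ha hq).trans_le ham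
  rw [div_mul_eq_mul_div, div_le_div_iff₀ hm ha]
  nlinarith

end Ratio

theorem scaled_mass_deficit_bounds {α : Type*} [MeasurableSpace α] {μ : Measure α} {s : Set α}
    (hs : s.Nonempty) (hs_meas : MeasurableSet s) (hμs : μ s < ⊤) {f g : α → ℝ}
    (hf : IntegrableOn f s μ) (hg : IntegrableOn g s μ) (hf_below : BddBelow (f '' s))
    (hf_above : BddAbove (f '' s)) (hf_inf : 0 < sInf (f '' s)) {ε q m : ℝ}
    (hfg : ∀ x ∈ s, |g x - f x| ≤ ε) (hε_inf : ε ≤ sInf (f '' s) / 2)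
    (hε_sup : ε ≤ sSup (f '' s) / 6) (hε_mass : ε * μ.real s ≤ (1 - ∫ x in s, f x ∂μ) / 8)
    (hq : 0 < q) (hm_lo : sInf (g '' s) * q ≤ m) (hm_hi : m ≤ 3 * sSup (g '' s) * q) :
    (1 - ∫ x in s, f x ∂μ) / (4 * sSup (f '' s)) ≤ q / m * (1 - ∫ x in s, g x ∂μ) ∧
      q / m * (1 - ∫ x in s, g x ∂μ) ≤ 2 / sInf (f '' s) := by
  set I := ∫ x in s, f x ∂μ
  set J := ∫ x in s, g x ∂μ
  have hS : 0 < sSup (f '' s) :=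
    hf_inf.trans_le (csInf_le_csSup (hs.image f) hf_below hf_above)
  have hJ : |J - I| ≤ ε * μ.real s := abs_setIntegral_sub_le hμs hf hg hfg
  rw [abs_le] at hJ
  have hJ₀ : 0 ≤ J := setIntegral_nonneg hs_meas fun x hx => by
    linarith [(abs_le.1 (hfg x hx)).1, csInf_le hf_below (mem_image_of_mem f hx)]
  have hg_inf : sInf (f '' s) / 2 ≤ sInf (g '' s) := by
    linarith [sub_le_csInf_image hs hf_below hfg]
  have hg_sup : sSup (g '' s) ≤ sSup (f '' s) + ε := csSup_image_le_add hs hf_above hfg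
  have hm : 0 < m := by nlinarith
  constructor
  -- `1 - J ≥ 7/8 (1 - I)` and `3 sup g ≤ 7/2 sup f`, and `(7/8) / (7/2) = 1/4`.
  · calc (1 - I) / (4 * sSup (f '' s)) ≤ (1 - J) / (7 / 2 * sSup (f '' s)) := by
          rw [div_le_div_iff₀ (by positivity) (by positivity)]
          nlinarith
      _ ≤ q / m * (1 - J) := by
          refine div_le_div_mul_of_le_mul (by linarith) hq hm
            (hm_hi.trans (mul_le_mul_of_nonneg_right (by linarith) hq.le))
  · calc q / m * (1 - J) ≤ (1 - J) / sInf (g '' s) :=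
          div_mul_le_div_of_mul_le (by linarith) (by linarith) hq hm_lo
      _ ≤ 1 / (sInf (f '' s) / 2) := by gcongr; linarith
      _ = 2 / sInf (f '' s) := by ring

theorem stmt17_general {T : ℝ} (hT : 0 < T) (f : ℝ → ℝ)
    (hf_int : IntegrableOn f (Set.Ioo 0 T))
    (hf_nonneg : ∀ t ∈ Set.Ioo 0 T, 0 ≤ f t)
    (hinf_pos : 0 < sInf (f '' Set.Ioo 0 T))
    (hbdd : BddAbove (f '' Set.Ioo 0 T))
    (hmass : ∫ t in Set.Ioo (0:ℝ) T, f t < 1)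
    (fn : ℕ → ℝ → ℝ) (hfn_int : ∀ n, IntegrableOn (fn n) (Set.Ioo 0 T))
    -- sandwich: f − 2/(nT) ≤ f̃_n = f_n − 1/(nT) ≤ f
    (hsand : ∀ n : ℕ, 1 ≤ n → ∀ t ∈ Set.Ioo (0:ℝ) T,
      f t - 2 / (n * T) ≤ fn n t - 1 / (n * T) ∧ fn n t - 1 / (n * T) ≤ f t)
    (kn mn Bn Ln Rn Cn : ℕ → ℕ)
    (hkn : ∀ n, 0 < kn n)
    (hcount : ∀ n, mn n = Bn n + Ln n + Rn n + Cn n)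
    -- block-count identities for inf and sup of f_n
    (hinf_fn : ∀ n : ℕ, 1 ≤ n →
      (Bn n : ℝ) / (kn n * n * T) = sInf (fn n '' Set.Ioo 0 T))
    (hsup_fn : ∀ n : ℕ, 1 ≤ n →
      ((Bn n : ℝ) + max (Ln n) (max (Rn n) (Cn n))) / (kn n * n * T) =
        sSup (fn n '' Set.Ioo 0 T))
    (dn : ℕ → ℝ)
    (hdn : ∀ n, dn n = (kn n * n * T / mn n) * (1 - ∫ t in Set.Ioo (0:ℝ) T, fn n t)) :
    ∀ᶠ n in atTop,
      (1 - ∫ t in Set.Ioo (0:ℝ) T, f t) / (4 * sSup (f '' Set.Ioo 0 T)) ≤ dn n ∧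
      dn n ≤ 2 / sInf (f '' Set.Ioo 0 T) := by
  have hs : (Ioo 0 T).Nonempty := nonempty_Ioo.2 hT
  have hf_below : BddBelow (f '' Ioo 0 T) := ⟨0, forall_mem_image.2 hf_nonneg⟩
  have hS : 0 < sSup (f '' Ioo 0 T) :=
    hinf_pos.trans_le (csInf_le_csSup (hs.image f) hf_below hbdd)
  have hε : Tendsto (fun n : ℕ => 1 / (n * T)) atTop (𝓝 0) := by
    simp only [one_div]
    exact (tendsto_natCast_atTop_atTop.atTop_mul_const hT).inv_tendsto_atTop
  filter_upwards [eventually_ge_atTop 1, hε.eventually (eventually_le_nhds (half_pos hinf_pos)),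
    hε.eventually (eventually_le_nhds (by positivity : 0 < sSup (f '' Ioo 0 T) / 6)),
    (hε.mul_const T).eventually (eventually_le_nhds (by linarith :
      0 * T < (1 - ∫ t in Ioo 0 T, f t) / 8))] with n hn hε_inf hε_sup hε_mass
  have hclose : ∀ t ∈ Ioo 0 T, |fn n t - f t| ≤ 1 / (n * T) := fun t ht => by
    have h2 : 2 / (n * T) = 2 * (1 / (n * T)) := by ring
    obtain ⟨hlo, hhi⟩ := hsand n hn t ht
    exact abs_le.2 ⟨by linarith, by linarith⟩
  have hq : (0 : ℝ) < kn n * n * T := by have := hkn n; positivity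
  obtain ⟨hm_lo, hm_hi⟩ := blockCount_bounds hq (hinf_fn n hn) (hsup_fn n hn)
  rw [← hcount] at hm_lo hm_hi
  rw [hdn n]
  exact scaled_mass_deficit_bounds hs measurableSet_Ioo measure_Ioo_lt_top hf_int (hfn_int n)
    hf_below hbdd hinf_pos hclose hε_inf hε_sup
    (by rwa [Real.volume_real_Ioo_of_le hT.le, sub_zero]) hq hm_lo hm_hi

theorem stmt17 {T : ℝ} (hT : 0 < T) (f : ℝ → ℝ)
    (hf_int : IntegrableOn f (Set.Ioo 0 T))
    (hf_nonneg : ∀ t ∈ Set.Ioo 0 T, 0 ≤ f t)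
    (hinf_pos : 0 < sInf (f '' Set.Ioo 0 T))
    (hbdd : BddAbove (f '' Set.Ioo 0 T))
    (hmass : ∫ t in Set.Ioo (0:ℝ) T, f t < 1)
    (fn : ℕ → ℝ → ℝ) (hfn_int : ∀ n, IntegrableOn (fn n) (Set.Ioo 0 T))
    -- sandwich: f − 2/(nT) ≤ f̃_n = f_n − 1/(nT) ≤ f
    (hsand : ∀ n : ℕ, 1 ≤ n → ∀ t ∈ Set.Ioo (0:ℝ) T,
      f t - 2 / (n * T) ≤ fn n t - 1 / (n * T) ∧ fn n t - 1 / (n * T) ≤ f t)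
    (kn mn Bn Ln Rn Cn : ℕ → ℕ)
    (hkn : ∀ n, 0 < kn n) (hmn : ∀ n, 0 < mn n)
    (hcount : ∀ n, mn n = Bn n + Ln n + Rn n + Cn n)
    -- block-count identities for inf and sup of f_n
    (hinf_fn : ∀ n : ℕ, 1 ≤ n →
      (Bn n : ℝ) / (kn n * n * T) = sInf (fn n '' Set.Ioo 0 T))
    (hsup_fn : ∀ n : ℕ, 1 ≤ n →
      ((Bn n : ℝ) + max (Ln n) (max (Rn n) (Cn n))) / (kn n * n * T) =
        sSup (fn n '' Set.Ioo 0 T))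
    (dn : ℕ → ℝ)
    (hdn : ∀ n, dn n = (kn n * n * T / mn n) * (1 - ∫ t in Set.Ioo (0:ℝ) T, fn n t)) :
    ∀ᶠ n in atTop,
      (1 - ∫ t in Set.Ioo (0:ℝ) T, f t) / (4 * sSup (f '' Set.Ioo 0 T)) ≤ dn n ∧
      dn n ≤ 2 / sInf (f '' Set.Ioo 0 T) :=
  stmt17_general hT f hf_int hf_nonneg hinf_pos hbdd hmass fn hfn_int hsand kn mn Bn Ln Rn Cn hkn
    hcount hinf_fn hsup_fn dn hdn
end
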